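/- Let (W,w) be a Parseval fusion frame for H (i.e., S_{W,w} = Σ_i w_i² π_{W_i} = I_H) such that w_i² (dim W_i)^{1/2} = c for some constant c and every i = 1,…,m. Then T_{W,w} is the unique element of the set {A ∈ 𝔏_{T*_{W,w}} : max_{1≤i≤m} ‖A M_i T*_{W,w}‖_F = min_{B ∈ 𝔏_{T*_{W,w}}} max_{1≤i≤m} ‖B M_i T*_{W,w}‖_F}. -/

import Mathlib

noncomputable section

open scoped InnerProductSpace

variable {𝕜 : Type} [RCLike 𝕜]
variable {H : Type} [NormedAddCommGroup H] [InnerProductSpace 𝕜 H] [FiniteDimensional 𝕜 H]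
variable {m : ℕ}

/-- The Hilbert space `𝒲 = ⊕ᵢ Wᵢ` of a fusion sequence, with the ℓ² inner product. -/
abbrev FFSpace (W : Fin m → Submodule 𝕜 H) : Type := PiLp 2 (fun i => ↥(W i))

/-- The synthesis operator `T_{W,w} : 𝒲 → H`, `(fᵢ)ᵢ ↦ Σᵢ wᵢ fᵢ`. -/
def synthOp (W : Fin m → Submodule 𝕜 H) (w : Fin m → ℝ) : FFSpace W →ₗ[𝕜] H where
  toFun f := ∑ i, (w i : 𝕜) • (f i : H)
  map_add' f g := by
    simp [Finset.sum_add_distrib, smul_add]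
  map_smul' c f := by
    simp [Finset.smul_sum]
    congr 1; funext i; rw [smul_comm]

/-- The analysis operator `T*_{W,w} : H → 𝒲`, `f ↦ (wᵢ π_{Wᵢ} f)ᵢ`. -/
def analysisOp (W : Fin m → Submodule 𝕜 H) (w : Fin m → ℝ) : H →ₗ[𝕜] FFSpace W where
  toFun f := WithLp.toLp 2 (fun i => (w i : 𝕜) • (Submodule.orthogonalProjectionOnto (W i) f))
  map_add' f g := by
    ext i; simp [smul_add]
  map_smul' c f := by
    ext i; simp; rw [smul_comm]

/-- The coordinate operator `M_{J,W} : 𝒲 → 𝒲`, keeping the coordinates in `J`. -/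
def MJ (W : Fin m → Submodule 𝕜 H) (J : Finset (Fin m)) : FFSpace W →ₗ[𝕜] FFSpace W where
  toFun f := WithLp.toLp 2 (fun j => if j ∈ J then f j else 0)
  map_add' f g := by
    ext j; by_cases h : j ∈ J <;> simp [h]
  map_smul' c f := by
    ext j; by_cases h : j ∈ J <;> simp [h]

/-- `Q : 𝒲 → 𝒱` is block-diagonal if `Q M_{j,W} 𝒲 ⊆ M_{j,V} 𝒱` for all `j`. -/
def IsBlockDiagonal (W V : Fin m → Submodule 𝕜 H) (Q : FFSpace W →ₗ[𝕜] FFSpace V) : Prop :=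
  ∀ j, LinearMap.range (Q ∘ₗ MJ W {j}) ≤ LinearMap.range (MJ V {j})

/-- `Q : 𝒲 → 𝒱` is component preserving if `Q M_{j,W} 𝒲 = M_{j,V} 𝒱` for all `j`. -/
def IsComponentPreserving (W V : Fin m → Submodule 𝕜 H) (Q : FFSpace W →ₗ[𝕜] FFSpace V) : Prop :=
  ∀ j, LinearMap.range (Q ∘ₗ MJ W {j}) = LinearMap.range (MJ V {j})

/-- The orthogonal projection onto `U` as an endomorphism of `H`. -/
def projL (U : Submodule 𝕜 H) : H →ₗ[𝕜] H :=
  U.subtype ∘ₗ (Submodule.orthogonalProjectionOnto U : H →L[𝕜] U).toLinearMap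

/-- The fusion frame operator `S_{W,w} = Σᵢ wᵢ² π_{Wᵢ}`. -/
def fusionFrameOp (W : Fin m → Submodule 𝕜 H) (w : Fin m → ℝ) : H →ₗ[𝕜] H :=
  ∑ i, ((w i ^ 2 : ℝ) : 𝕜) • projL (W i)

/-- The squared Frobenius norm `‖B‖_F² = tr(B*B)` of a linear map between
finite-dimensional inner product spaces. -/
def frobSq {𝕜 : Type} [RCLike 𝕜] {E F : Type} [NormedAddCommGroup E] [InnerProductSpace 𝕜 E]
    [FiniteDimensional 𝕜 E] [NormedAddCommGroup F] [InnerProductSpace 𝕜 F]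
    [FiniteDimensional 𝕜 F] (B : E →ₗ[𝕜] F) : ℝ :=
  RCLike.re (LinearMap.trace 𝕜 E (LinearMap.adjoint B ∘ₗ B))

/-- The worst-case one-erasure error `max_i ‖A Mᵢ T*_{W,w}‖_F` of a reconstruction
operator `A : 𝒲 → H`. -/
def maxErr (W : Fin m → Submodule 𝕜 H) (w : Fin m → ℝ) (A : FFSpace W →L[𝕜] H) : ℝ :=
  ⨆ i : Fin m, Real.sqrt (frobSq ((A : FFSpace W →ₗ[𝕜] H) ∘ₗ MJ W {i} ∘ₗ analysisOp W w))

/-- The set of left inverses of `T*_{W,w}` minimizing the worst-case one-erasure error. -/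
def optimalSet (W : Fin m → Submodule 𝕜 H) (w : Fin m → ℝ) : Set (FFSpace W →L[𝕜] H) :=
  {A | A ∘L LinearMap.toContinuousLinearMap (analysisOp W w) = ContinuousLinearMap.id 𝕜 H ∧
    maxErr W w A =
      ⨅ B : {B : FFSpace W →L[𝕜] H //
          B ∘L LinearMap.toContinuousLinearMap (analysisOp W w) = ContinuousLinearMap.id 𝕜 H},
        maxErr W w ↑B}

/-! For a left inverse `A` of `T*`, the one-erasure operators `Gᵢ = A Mᵢ T*` satisfy `Gᵢ πᵢ = Gᵢ`
and `Σᵢ Gᵢ = I = Σᵢ wᵢ² πᵢ`. Writing `Gᵢ = wᵢ² πᵢ + Eᵢ`, trace cyclicity and `Eᵢ πᵢ = Eᵢ` turn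
the cross term of `‖Gᵢ‖_F²` into `2 wᵢ² Re tr Eᵢ`, so `‖Gᵢ‖_F² = c² + 2 wᵢ² Re tr Eᵢ + ‖Eᵢ‖_F²`
with `Σᵢ Re tr Eᵢ = 0`. Some `Re tr Eᵢ` is nonnegative, so `maxᵢ ‖Gᵢ‖_F ≥ c`, which `T` attains.
If `maxᵢ ‖Gᵢ‖_F ≤ c`, every `Re tr Eᵢ` is `≤ 0`, hence `0`, hence every `Eᵢ` vanishes; as the
ranges of the `Mᵢ T*` span `𝒲`, this forces `A = T`. -/

open Module LinearMap

theorem setOf_and_eq_iInf_eq_singleton {α β : Type*} [ConditionallyCompleteLinearOrder β]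
    {p : α → Prop} {f : α → β} {a : α} (ha : p a) (hmin : ∀ b, p b → f a ≤ f b)
    (huniq : ∀ b, p b → f b ≤ f a → b = a) :
    {b | p b ∧ f b = ⨅ b' : {b' // p b'}, f b'} = {a} := by
  have : Nonempty {b' // p b'} := ⟨⟨a, ha⟩⟩
  have hinf : ⨅ b' : {b' // p b'}, f b' = f a :=
    le_antisymm (ciInf_le (f := fun b' : {b' // p b'} => f b')
        ⟨f a, by rintro _ ⟨b, rfl⟩; exact hmin b b.2⟩ ⟨a, ha⟩)
      (le_ciInf fun b => hmin b b.2)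
  ext b
  simp only [Set.mem_ofPred_eq, Set.mem_singleton_iff, hinf]
  exact ⟨fun ⟨hb, hfb⟩ => huniq b hb hfb.le, by rintro rfl; exact ⟨ha, rfl⟩⟩

section Frobenius

variable {E F : Type} [NormedAddCommGroup E] [InnerProductSpace 𝕜 E]
  [FiniteDimensional 𝕜 E] [NormedAddCommGroup F] [InnerProductSpace 𝕜 F] [FiniteDimensional 𝕜 F]

theorem frobSq_eq_sum_norm_sq {ι : Type} [Fintype ι] (b : OrthonormalBasis ι 𝕜 E)
    (B : E →ₗ[𝕜] F) : frobSq B = ∑ j, ‖B (b j)‖ ^ 2 := by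
  rw [frobSq, trace_eq_sum_inner _ b, map_sum]
  simp only [comp_apply, adjoint_inner_right, inner_self_eq_norm_sq]

theorem frobSq_nonneg (B : E →ₗ[𝕜] F) : 0 ≤ frobSq B := by
  rw [frobSq_eq_sum_norm_sq (stdOrthonormalBasis 𝕜 E)]
  positivity

theorem frobSq_eq_zero_iff {B : E →ₗ[𝕜] F} : frobSq B = 0 ↔ B = 0 := by
  set b := stdOrthonormalBasis 𝕜 E
  rw [frobSq_eq_sum_norm_sq b, Finset.sum_eq_zero_iff_of_nonneg fun _ _ => by positivity]
  simp only [Finset.mem_univ, true_implies, sq_eq_zero_iff, norm_eq_zero]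
  exact ⟨fun h => b.toBasis.ext fun j => by simpa using h j, fun h j => by simp [h]⟩

theorem frobSq_add (B C : E →ₗ[𝕜] F) :
    frobSq (B + C) = frobSq B + 2 * RCLike.re (trace 𝕜 E (adjoint B ∘ₗ C)) + frobSq C := by
  set b := stdOrthonormalBasis 𝕜 E
  simp only [frobSq_eq_sum_norm_sq b, trace_eq_sum_inner _ b, comp_apply, adjoint_inner_right,
    LinearMap.add_apply, norm_add_sq (𝕜 := 𝕜), map_sum, Finset.sum_add_distrib, Finset.mul_sum]

end Frobenius

section Projection

variable (U : Submodule 𝕜 H)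

theorem projL_comp_projL : projL U ∘ₗ projL U = projL U := by
  ext x
  simp [projL, U.starProjection_eq_self_iff]

theorem adjoint_projL : adjoint (projL U) = projL U :=
  U.starProjection_isSymmetric.adjoint_eq

theorem trace_projL : trace 𝕜 H (projL U) = finrank 𝕜 U := by
  have hid : (U.orthogonalProjectionOnto : H →L[𝕜] U).toLinearMap ∘ₗ U.subtype = LinearMap.id := by
    ext x
    simp
  rw [projL, trace_comp_comm', hid, trace_id]

variable {U}

theorem trace_projL_comp {B : H →ₗ[𝕜] H} (hB : B ∘ₗ projL U = B) :
    trace 𝕜 H (projL U ∘ₗ B) = trace 𝕜 H B := by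
  conv_lhs => rw [← hB, trace_comp_comm', comp_assoc, projL_comp_projL, hB]

variable (U)

theorem frobSq_smul_projL (a : ℝ) :
    frobSq ((a : 𝕜) • projL U) = a ^ 2 * finrank 𝕜 U := by
  rw [frobSq, map_smulₛₗ, RCLike.conj_ofReal, adjoint_projL, smul_comp, comp_smul,
    projL_comp_projL, smul_smul, map_smul, trace_projL, smul_eq_mul, ← RCLike.ofReal_mul,
    ← RCLike.ofReal_natCast, ← RCLike.ofReal_mul, RCLike.ofReal_re, sq]

variable {U}

theorem frobSq_eq_of_comp_projL (a : ℝ) {G : H →ₗ[𝕜] H} (hG : G ∘ₗ projL U = G) :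
    frobSq G = a ^ 2 * finrank 𝕜 U + 2 * a * RCLike.re (trace 𝕜 H (G - (a : 𝕜) • projL U))
      + frobSq (G - (a : 𝕜) • projL U) := by
  have hE : (G - (a : 𝕜) • projL U) ∘ₗ projL U = G - (a : 𝕜) • projL U := by
    rw [sub_comp, hG, smul_comp, projL_comp_projL]
  conv_lhs => rw [← add_sub_cancel ((a : 𝕜) • projL U) G]
  rw [frobSq_add, frobSq_smul_projL, map_smulₛₗ, RCLike.conj_ofReal, adjoint_projL,
    smul_comp, map_smul, trace_projL_comp hE, smul_eq_mul, RCLike.re_ofReal_mul]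
  ring

end Projection

section Decomposition

variable {ι : Type} [Fintype ι] {U : ι → Submodule 𝕜 H} {a : ι → ℝ} {G : ι → H →ₗ[𝕜] H}

theorem sum_re_trace_sub_smul_projL_eq_zero (hsum : ∑ i, G i = ∑ i, (a i : 𝕜) • projL (U i)) :
    ∑ i, RCLike.re (trace 𝕜 H (G i - (a i : 𝕜) • projL (U i))) = 0 := by
  rw [← map_sum, ← map_sum, Finset.sum_sub_distrib, hsum, sub_self, map_zero, map_zero]

theorem exists_sq_mul_finrank_le_frobSq [Nonempty ι] (ha : ∀ i, 0 ≤ a i)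
    (hG : ∀ i, G i ∘ₗ projL (U i) = G i) (hsum : ∑ i, G i = ∑ i, (a i : 𝕜) • projL (U i)) :
    ∃ i, a i ^ 2 * finrank 𝕜 (U i) ≤ frobSq (G i) := by
  obtain ⟨i, -, hi⟩ := Finset.exists_le_of_sum_le Finset.univ_nonempty (f := fun _ => (0 : ℝ))
    (g := fun i => RCLike.re (trace 𝕜 H (G i - (a i : 𝕜) • projL (U i))))
    (by rw [Finset.sum_const_zero, sum_re_trace_sub_smul_projL_eq_zero hsum])
  refine ⟨i, ?_⟩
  rw [frobSq_eq_of_comp_projL (a i) (hG i)]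
  have := mul_nonneg (mul_nonneg zero_le_two (ha i)) hi
  linarith [frobSq_nonneg (G i - (a i : 𝕜) • projL (U i))]

theorem eq_smul_projL_of_frobSq_le (ha : ∀ i, 0 < a i) (hG : ∀ i, G i ∘ₗ projL (U i) = G i)
    (hsum : ∑ i, G i = ∑ i, (a i : 𝕜) • projL (U i))
    (hle : ∀ i, frobSq (G i) ≤ a i ^ 2 * finrank 𝕜 (U i)) (i : ι) :
    G i = (a i : 𝕜) • projL (U i) := by
  set τ := fun i => RCLike.re (trace 𝕜 H (G i - (a i : 𝕜) • projL (U i)))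
  have hdef : ∀ i, 2 * a i * τ i + frobSq (G i - (a i : 𝕜) • projL (U i)) ≤ 0 := fun i => by
    linarith [hle i, frobSq_eq_of_comp_projL (a i) (hG i)]
  have hτ_nonpos : ∀ i, τ i ≤ 0 := fun i => by
    refine nonpos_of_mul_nonpos_right ?_ (mul_pos two_pos (ha i))
    linarith [hdef i, frobSq_nonneg (G i - (a i : 𝕜) • projL (U i))]
  have hτ : τ i = 0 := (Finset.sum_eq_zero_iff_of_nonpos fun i _ => hτ_nonpos i).1
    (sum_re_trace_sub_smul_projL_eq_zero hsum) i (Finset.mem_univ i)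
  have hE := hdef i
  rw [hτ, mul_zero, zero_add] at hE
  rw [← sub_eq_zero, ← frobSq_eq_zero_iff]
  exact le_antisymm hE (frobSq_nonneg _)

end Decomposition

section FusionFrame

variable (W : Fin m → Submodule 𝕜 H) (w : Fin m → ℝ)

def erasureOp {F : Type} [AddCommGroup F] [Module 𝕜 F] (A : FFSpace W →ₗ[𝕜] F) (i : Fin m) :
    H →ₗ[𝕜] F :=
  A ∘ₗ MJ W {i} ∘ₗ analysisOp W w

omit [FiniteDimensional 𝕜 H] in
theorem sum_MJ_singleton : ∑ i, MJ W {i} = LinearMap.id := by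
  ext x j
  simp [MJ]

variable {F : Type} [AddCommGroup F] [Module 𝕜 F]

theorem sum_erasureOp (A : FFSpace W →ₗ[𝕜] F) : ∑ i, erasureOp W w A i = A ∘ₗ analysisOp W w := by
  ext x
  simp only [erasureOp, LinearMap.sum_apply, comp_apply, ← map_sum]
  rw [← LinearMap.sum_apply, sum_MJ_singleton, id_apply]

theorem erasureOp_comp_projL (A : FFSpace W →ₗ[𝕜] F) (i : Fin m) :
    erasureOp W w A i ∘ₗ projL (W i) = erasureOp W w A i := by
  suffices MJ W {i} ∘ₗ analysisOp W w ∘ₗ projL (W i) = MJ W {i} ∘ₗ analysisOp W w by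
    simp only [erasureOp, comp_assoc, this]
  ext x j
  by_cases hj : j = i
  · subst hj
    simp [MJ, analysisOp, projL, Submodule.orthogonalProjectionOnto_starProjection_of_le le_rfl]
  · simp [MJ, hj]

theorem erasureOp_synthOp (i : Fin m) :
    erasureOp W w (synthOp W w) i = ((w i ^ 2 : ℝ) : 𝕜) • projL (W i) := by
  ext x
  simp [erasureOp, synthOp, MJ, analysisOp, projL, smul_smul, sq, apply_ite, Finset.sum_ite_eq']

theorem synthOp_comp_analysisOp : synthOp W w ∘ₗ analysisOp W w = fusionFrameOp W w := by
  rw [← sum_erasureOp, fusionFrameOp]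
  exact Finset.sum_congr rfl fun i _ => erasureOp_synthOp W w i

variable {W w}

theorem MJ_singleton_analysisOp_inv_smul {i : Fin m} (hwi : w i ≠ 0) (x : FFSpace W) :
    MJ W {i} (analysisOp W w (((w i)⁻¹ : 𝕜) • (x i : H))) = MJ W {i} x := by
  ext j
  by_cases hj : j = i
  · subst hj
    simp [MJ, analysisOp, smul_smul, hwi]
  · simp [MJ, hj]

theorem eq_of_erasureOp_eq (hw : ∀ i, w i ≠ 0) {A B : FFSpace W →ₗ[𝕜] F}
    (h : ∀ i, erasureOp W w A i = erasureOp W w B i) : A = B := by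
  ext x
  rw [← LinearMap.id_apply (R := 𝕜) x, ← sum_MJ_singleton, LinearMap.sum_apply, map_sum, map_sum]
  refine Finset.sum_congr rfl fun i _ => ?_
  rw [← MJ_singleton_analysisOp_inv_smul (hw i)]
  exact LinearMap.congr_fun (h i) _

end FusionFrame

section Optimality

variable {W : Fin m → Submodule 𝕜 H} {w : Fin m → ℝ} {c : ℝ}

theorem sqrt_frobSq_le_maxErr (A : FFSpace W →L[𝕜] H) (i : Fin m) :
    √(frobSq (erasureOp W w (A : FFSpace W →ₗ[𝕜] H) i)) ≤ maxErr W w A :=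
  le_ciSup (f := fun i => √(frobSq (erasureOp W w (A : FFSpace W →ₗ[𝕜] H) i)))
    (Set.finite_range _).bddAbove i

theorem maxErr_nonneg (A : FFSpace W →L[𝕜] H) : 0 ≤ maxErr W w A :=
  Real.iSup_nonneg fun _ => Real.sqrt_nonneg _

-- Not `= c`: for `m = 0` the supremum is `0`.
theorem maxErr_synthOp (hc : ∀ i, w i ^ 2 * √(finrank 𝕜 (W i)) = c) :
    maxErr W w (synthOp W w).toContinuousLinearMap = ⨆ _ : Fin m, c := by
  refine iSup_congr fun i => ?_
  rw [coe_toContinuousLinearMap, ← erasureOp, erasureOp_synthOp, frobSq_smul_projL,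
    Real.sqrt_mul' _ (Nat.cast_nonneg _), Real.sqrt_sq (sq_nonneg _), hc]

omit [FiniteDimensional 𝕜 H] in
theorem sq_weight_sq_mul_finrank_eq_sq (hc : ∀ i, w i ^ 2 * √(finrank 𝕜 (W i)) = c) (i : Fin m) :
    (w i ^ 2) ^ 2 * finrank 𝕜 (W i) = c ^ 2 := by
  rw [← hc i, mul_pow, Real.sq_sqrt (Nat.cast_nonneg _)]

variable (hParseval : fusionFrameOp W w = LinearMap.id)
  (hc : ∀ i, w i ^ 2 * √(finrank 𝕜 (W i)) = c)
  {A : FFSpace W →L[𝕜] H} (hA : A ∘L (analysisOp W w).toContinuousLinearMap = .id 𝕜 H)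
include hParseval hA

theorem sum_erasureOp_eq_of_parseval :
    ∑ i, erasureOp W w (A : FFSpace W →ₗ[𝕜] H) i = ∑ i, ((w i ^ 2 : ℝ) : 𝕜) • projL (W i) := by
  rw [sum_erasureOp, ← fusionFrameOp, hParseval]
  exact congrArg ContinuousLinearMap.toLinearMap hA

include hc

theorem le_maxErr [Nonempty (Fin m)] : c ≤ maxErr W w A := by
  obtain ⟨i, hi⟩ := exists_sq_mul_finrank_le_frobSq (fun i => sq_nonneg (w i))
    (erasureOp_comp_projL W w _) (sum_erasureOp_eq_of_parseval hParseval hA)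
  rw [sq_weight_sq_mul_finrank_eq_sq hc] at hi
  exact (Real.le_sqrt_of_sq_le hi).trans (sqrt_frobSq_le_maxErr A i)

theorem eq_synthOp_of_sqrt_frobSq_le (hw : ∀ i, 0 < w i)
    (hle : ∀ i, √(frobSq (erasureOp W w (A : FFSpace W →ₗ[𝕜] H) i)) ≤ c) :
    A = (synthOp W w).toContinuousLinearMap := by
  refine ContinuousLinearMap.coe_injective (eq_of_erasureOp_eq (fun i => (hw i).ne') fun i => ?_)
  rw [coe_toContinuousLinearMap, erasureOp_synthOp]
  refine eq_smul_projL_of_frobSq_le (fun i => pow_pos (hw i) 2) (erasureOp_comp_projL W w _)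
    (sum_erasureOp_eq_of_parseval hParseval hA) (fun i => ?_) i
  rw [sq_weight_sq_mul_finrank_eq_sq hc]
  exact (Real.sqrt_le_iff.1 (hle i)).2

end Optimality

theorem parseval_unique_optimal_general
    {𝕜 : Type} [RCLike 𝕜] {H : Type} [NormedAddCommGroup H] [InnerProductSpace 𝕜 H]
    [FiniteDimensional 𝕜 H] {m : ℕ}
    (W : Fin m → Submodule 𝕜 H) (w : Fin m → ℝ) (hw : ∀ i, 0 < w i)
    (hParseval : fusionFrameOp W w = LinearMap.id)
    (c : ℝ) (hc : ∀ i, w i ^ 2 * Real.sqrt (Module.finrank 𝕜 ↥(W i)) = c) :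
    optimalSet W w = {LinearMap.toContinuousLinearMap (synthOp W w)} := by
  have hT : (synthOp W w).toContinuousLinearMap ∘L (analysisOp W w).toContinuousLinearMap =
      .id 𝕜 H :=
    ContinuousLinearMap.coe_injective ((synthOp_comp_analysisOp W w).trans hParseval)
  refine setOf_and_eq_iInf_eq_singleton hT (fun A hA => ?_) (fun A hA hle => ?_)
  · rw [maxErr_synthOp hc]
    exact Real.iSup_le (fun i => have : Nonempty (Fin m) := ⟨i⟩; le_maxErr hParseval hc hA)
      (maxErr_nonneg A)
  · refine eq_synthOp_of_sqrt_frobSq_le hParseval hc hA hw fun i => ?_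
    have : Nonempty (Fin m) := ⟨i⟩
    calc _ ≤ maxErr W w A := sqrt_frobSq_le_maxErr A i
      _ ≤ _ := hle
      _ = c := by rw [maxErr_synthOp hc, ciSup_const]

/-- if `(W,w)` is a Parseval fusion frame with `wᵢ² (dim Wᵢ)^{1/2} = c` for
every `i`, then `T_{W,w}` is the unique left inverse of `T*_{W,w}` minimizing the
worst-case one-erasure error. -/
theorem parseval_unique_optimal
    {𝕜 : Type} [RCLike 𝕜] {H : Type} [NormedAddCommGroup H] [InnerProductSpace 𝕜 H]
    [FiniteDimensional 𝕜 H] {m : ℕ}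
    (W : Fin m → Submodule 𝕜 H) (w : Fin m → ℝ) (hw : ∀ i, 0 < w i) (hW : ⨆ i, W i = ⊤)
    (hParseval : fusionFrameOp W w = LinearMap.id)
    (c : ℝ) (hc : ∀ i, w i ^ 2 * Real.sqrt (Module.finrank 𝕜 ↥(W i)) = c) :
    optimalSet W w = {LinearMap.toContinuousLinearMap (synthOp W w)} :=
  parseval_unique_optimal_general W w hw hParseval c hc
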